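/- Monotonicity and Genuine Advance of completed timestamps (Theorem 5.16): Let n, t be naturals with n > 3t and B ⊆ Fin n with |B| ≤ t. Let g : ℕ → (Fin n → Option ℕ) be a sequence of partial timestamp vectors such that each domain D k = { i | g k i ≠ none } satisfies |D k| ≥ n − t. Define full vectors f : ℕ → (Fin n → ℕ) by f 0 i = (g 0 i).getD 0 and f (k+1) i = (g (k+1) i).getD (f k i). Suppose for every k: (i) for all i and v, g (k+1) i = some v implies f k i ≤ v, and (ii) for every i ∉ B with i ∈ D k ∩ D (k+1), g k i ≠ g (k+1) i. Then for every k there exists an index i ∉ B with f k i < f (k+1) i; moreover f k ≤ f (k+1) pointwise for every k, so f is strictly monotone and the set { f k | k ∈ ℕ } is totally ordered under the pointwise order. -/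

import Mathlib

/-!
On every index where the partial timestamp `g k` is defined, the completion `f k` agrees with it.
Hypothesis (i) makes every step `f k ≤ f (k + 1)` pointwise, so `f` is monotone and its values
form a chain. Two domains of size at least `n - t` meet in at least `n - 2t > t` indices, so some
correct reader reports at both steps; there the two reported values differ by (ii) and the later
one dominates the earlier by (i), which is a strict advance and makes `f` strictly monotone.
-/

theorem Finset.nonempty_inter_sdiff_of_card_le {α : Type*} [Fintype α] [DecidableEq α]
    {s u b : Finset α} {t : ℕ} (hs : Fintype.card α - t ≤ s.card)
    (hu : Fintype.card α - t ≤ u.card) (hb : b.card ≤ t) (ht : 3 * t < Fintype.card α) :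
    ((s ∩ u) \ b).Nonempty := by
  rw [← Finset.card_pos]
  have hunion := Finset.card_le_univ (s ∪ u)
  have hinter := Finset.card_inter_add_card_union s u
  have hsdiff : (s ∩ u).card ≤ ((s ∩ u) \ b).card + b.card := Finset.card_le_card_sdiff_add_card
  omega

theorem Option.le_getD_of_forall_eq_some_le {α : Type*} [Preorder α] {a : α} {o : Option α}
    (h : ∀ v, o = some v → a ≤ v) : a ≤ o.getD a := by
  cases o with
  | none => exact le_rfl
  | some v => exact h v rfl

theorem Option.eq_some_of_getD_eq {α : Type*} {o : Option α} {a d : α} (ho : o ≠ none)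
    (ha : a = o.getD d) : o = some a := by
  rw [ha, Option.getD_of_ne_none ho]

/-- Theorem 5.16, Monotonicity and Genuine Advance of completed
timestamps: with `n > 3t` and at most `t` Byzantine readers `B`, if each partial
timestamp in the sequence `g` is defined on at least `n - t` indices, successive
partial timestamps dominate the previous completion, and correct readers' entries
differ between successive partial timestamps on their common domains, then each step
of the recursive completion `f` strictly advances at some correct reader's index,
`f` is pointwise monotone, strictly monotone, and its values form a chain. -/
theorem monotonicity_and_genuine_advance (n t : ℕ) (hnt : n > 3 * t)
    (B : Finset (Fin n)) (hB : B.card ≤ t)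
    (g : ℕ → (Fin n → Option ℕ))
    (D : ℕ → Finset (Fin n))
    (hD : ∀ k, D k = Finset.univ.filter (fun i => g k i ≠ none))
    (hcard : ∀ k, (D k).card ≥ n - t)
    (f : ℕ → (Fin n → ℕ))
    (hf0 : ∀ i, f 0 i = (g 0 i).getD 0)
    (hfs : ∀ k i, f (k + 1) i = (g (k + 1) i).getD (f k i))
    (hdom : ∀ k i v, g (k + 1) i = some v → f k i ≤ v)
    (hne : ∀ k i, i ∉ B → i ∈ D k ∩ D (k + 1) → g k i ≠ g (k + 1) i) :
    (∀ k, ∃ i, i ∉ B ∧ f k i < f (k + 1) i) ∧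
      (∀ k i, f k i ≤ f (k + 1) i) ∧
      (∀ j k, j < k → (∀ i, f j i ≤ f k i) ∧ f j ≠ f k) ∧
      (∀ a b : ℕ, (∀ i, f a i ≤ f b i) ∨ (∀ i, f b i ≤ f a i)) := by
  have hagree : ∀ k, ∀ i ∈ D k, g k i = some (f k i) := by
    rintro (_ | k) i hi <;> rw [hD, Finset.mem_filter] at hi
    exacts [Option.eq_some_of_getD_eq hi.2 (hf0 i), Option.eq_some_of_getD_eq hi.2 (hfs k i)]
  have hstep : ∀ k i, f k i ≤ f (k + 1) i := fun k i =>
    (hfs k i).symm ▸ Option.le_getD_of_forall_eq_some_le (hdom k i)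
  have hadvance : ∀ k, ∃ i, i ∉ B ∧ f k i < f (k + 1) i := by
    intro k
    obtain ⟨i, hi⟩ := Finset.nonempty_inter_sdiff_of_card_le
      (by rw [Fintype.card_fin]; exact hcard k) (by rw [Fintype.card_fin]; exact hcard (k + 1))
      hB (by rwa [Fintype.card_fin])
    obtain ⟨hboth, hiB⟩ := Finset.mem_sdiff.mp hi
    have hdiff := hne k i hiB hboth
    rw [hagree k i (Finset.mem_inter.mp hboth).1, hagree (k + 1) i (Finset.mem_inter.mp hboth).2,
      Ne, Option.some_inj] at hdiff
    exact ⟨i, hiB, (hstep k i).lt_of_ne hdiff⟩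
  have hmono : Monotone f := monotone_nat_of_le_succ fun k => hstep k
  have hstrict : StrictMono f := strictMono_nat_of_lt_succ fun k =>
    Pi.lt_def.mpr ⟨hstep k, (hadvance k).imp fun _ => And.right⟩
  exact ⟨hadvance, hstep, fun j k hjk => ⟨hmono hjk.le, (hstrict hjk).ne⟩,
    fun a b => (le_total a b).imp (fun h => hmono h) (fun h => hmono h)⟩
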